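/- Let Y = (Y₁, Y₂) be uniformly distributed on E and let X = (X₁, X₂) = T·Y, i.e. X₁ = √2·Y₁ + (√2/2)·Y₂ and X₂ = (√6/2)·Y₂. Then: E[X₁^i X₂^j] = 0 whenever i + j is odd and i + j ≤ 5; E[X₁²] = E[X₂²] = 1 and E[X₁X₂] = 0 (zero mean and identity covariance matrix); E[X₁⁴] = E[X₂⁴] = 3/2; E[X₁²X₂²] = 1/2; and E[X₁³X₂] = E[X₁X₂³] = 0. -/
import Mathlib


/-- The step set of the three-gambler random walk. -/
def stepSet : Finset (ℤ × ℤ) := {(1, 0), (-1, 0), (0, 1), (0, -1), (1, -1), (-1, 1)}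

/-- The mixed moment `E[X₁^i X₂^j]` of `X = T·Y` where `Y` is uniformly distributed
on `stepSet`, `X₁ = √2·Y₁ + (√2/2)·Y₂` and `X₂ = (√6/2)·Y₂`. -/
noncomputable def Xmoment (i j : ℕ) : ℝ :=
  (1 / 6 : ℝ) * ∑ e ∈ stepSet,
    (Real.sqrt 2 * (e.1 : ℝ) + Real.sqrt 2 / 2 * (e.2 : ℝ)) ^ i *
      (Real.sqrt 6 / 2 * (e.2 : ℝ)) ^ j

lemma Xmoment_eq (i j : ℕ) : Xmoment i j =
    (1/6 : ℝ) * ((Real.sqrt 2 * 1 + Real.sqrt 2 / 2 * 0) ^ i * (Real.sqrt 6 / 2 * 0) ^ j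
      + (Real.sqrt 2 * (-1) + Real.sqrt 2 / 2 * 0) ^ i * (Real.sqrt 6 / 2 * 0) ^ j
      + (Real.sqrt 2 * 0 + Real.sqrt 2 / 2 * 1) ^ i * (Real.sqrt 6 / 2 * 1) ^ j
      + (Real.sqrt 2 * 0 + Real.sqrt 2 / 2 * (-1)) ^ i * (Real.sqrt 6 / 2 * (-1)) ^ j
      + (Real.sqrt 2 * 1 + Real.sqrt 2 / 2 * (-1)) ^ i * (Real.sqrt 6 / 2 * (-1)) ^ j
      + (Real.sqrt 2 * (-1) + Real.sqrt 2 / 2 * 1) ^ i * (Real.sqrt 6 / 2 * 1) ^ j) := by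
  simp [Xmoment, stepSet, Finset.sum_insert, Prod.ext_iff]
  ring

theorem moments_of_transformed_step :
    (∀ i j : ℕ, Odd (i + j) → i + j ≤ 5 → Xmoment i j = 0) ∧
    Xmoment 2 0 = 1 ∧ Xmoment 0 2 = 1 ∧ Xmoment 1 1 = 0 ∧
    Xmoment 4 0 = 3 / 2 ∧ Xmoment 0 4 = 3 / 2 ∧ Xmoment 2 2 = 1 / 2 ∧
    Xmoment 3 1 = 0 ∧ Xmoment 1 3 = 0 := by
  have h2 : Real.sqrt 2 ^ 2 = 2 := Real.sq_sqrt (by norm_num)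
  have h6 : Real.sqrt 6 ^ 2 = 6 := Real.sq_sqrt (by norm_num)
  refine ⟨?_, ?_, ?_, ?_, ?_, ?_, ?_, ?_, ?_⟩
  · intro i j hodd hle
    have hi : i ≤ 5 := by omega
    have hj : j ≤ 5 := by omega
    interval_cases i <;> interval_cases j <;>
      first
        | (exfalso; revert hodd; decide)
        | (rw [Xmoment_eq]; ring)
  all_goals rw [Xmoment_eq]; nlinarith [h2, h6, Real.sqrt_nonneg 2, Real.sqrt_nonneg 6]
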